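/- Töplitz-type stability of weighted Fréchet means: let p^{(n)} = (p_1^{(n)},...,p_n^{(n)}) be probability weights with p_k^{(n)} → 0 as n → ∞ for each fixed k, and x_n → x in a Hadamard space. Then the weighted Fréchet means m_n = argmin_z Σ_{k=1}^n p_k^{(n)} d(x_k, z)^2 converge to x. -/
import Mathlib


open Filter

/-- Töplitz-type stability of weighted Fréchet means: if `p^{(n)}` are
probability weights on `{1,...,n}` with `p_k^{(n)} → 0` for each fixed `k`,
and `x_n → x` in a Hadamard space, then the weighted Fréchet means
`m_n = argmin_z ∑_k p_k^{(n)} d(x_k,z)^2` converge to `x`. -/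
theorem weighted_frechet_mean_toeplitz {H : Type*} [MetricSpace H] [CompleteSpace H]
    (g : H → H → ℝ → H)
    (hnpc : ∀ x y z : H, ∀ t ∈ Set.Icc (0:ℝ) 1,
      dist z (g x y t) ^ 2 ≤ (1 - t) * dist z x ^ 2 + t * dist z y ^ 2
        - t * (1 - t) * dist x y ^ 2)
    (hgeo : ∀ x y : H, ∀ t ∈ Set.Icc (0:ℝ) 1,
      dist x (g x y t) = t * dist x y ∧ dist (g x y t) y = (1 - t) * dist x y)
    (p : ℕ → ℕ → ℝ)
    (hpos : ∀ n : ℕ, 1 ≤ n → ∀ k ∈ Finset.Icc 1 n, 0 ≤ p n k)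
    (hsum : ∀ n : ℕ, 1 ≤ n → ∑ k ∈ Finset.Icc 1 n, p n k = 1)
    (hnull : ∀ k : ℕ, Tendsto (fun n : ℕ => p n k) atTop (nhds 0))
    (x : ℕ → H) (x₀ : H) (hx : Tendsto x atTop (nhds x₀))
    (m : ℕ → H)
    (hm : ∀ n : ℕ, 1 ≤ n → ∀ z : H,
      ∑ k ∈ Finset.Icc 1 n, p n k * dist (x k) (m n) ^ 2
        ≤ ∑ k ∈ Finset.Icc 1 n, p n k * dist (x k) z ^ 2) :
    Tendsto m atTop (nhds x₀) := by
  -- the sequence a k = d(x_k, x₀)² tends to 0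
  have ha : Tendsto (fun k => dist (x k) x₀ ^ 2) atTop (nhds 0) := by
    have h := (tendsto_iff_dist_tendsto_zero.mp hx).pow 2
    simpa using h
  have ha0 : ∀ k, 0 ≤ dist (x k) x₀ ^ 2 := fun k => sq_nonneg _
  -- S n = ∑ p n k * a k
  set S : ℕ → ℝ := fun n => ∑ k ∈ Finset.Icc 1 n, p n k * dist (x k) x₀ ^ 2 with hS_def
  have hS0 : ∀ n, 0 ≤ S n := by
    intro n
    rcases Nat.eq_zero_or_pos n with h | h
    · simp [hS_def, h]
    · exact Finset.sum_nonneg fun k hk => mul_nonneg (hpos n h k hk) (ha0 k)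
  -- Töplitz lemma: S n → 0
  have hStend : Tendsto S atTop (nhds 0) := by
    rw [Metric.tendsto_atTop]
    intro ε hε
    obtain ⟨M, hM⟩ := ha.bddAbove_range
    have hM' : ∀ k, dist (x k) x₀ ^ 2 ≤ M + 1 := fun k =>
      le_trans (hM (Set.mem_range_self k)) (by linarith)
    have hMnn : 0 ≤ M := le_trans (ha0 0) (hM (Set.mem_range_self 0))
    have hMpos : 0 < M + 1 := by linarith
    obtain ⟨K, hK⟩ := (Metric.tendsto_atTop.mp ha) (ε / 2) (by linarith)
    have hKsmall : ∀ k, K ≤ k → dist (x k) x₀ ^ 2 < ε / 2 := by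
      intro k hk
      have := hK k hk
      rw [Real.dist_eq, abs_of_nonneg (by simp [ha0 k] : (0:ℝ) ≤ dist (x k) x₀ ^ 2 - 0)] at this
      linarith [this]
    have hT : Tendsto (fun n => ∑ k ∈ Finset.Icc 1 K, p n k) atTop (nhds 0) := by
      have := tendsto_finset_sum (Finset.Icc 1 K) (fun k _ => hnull k)
      simpa using this
    obtain ⟨N, hN⟩ := (Metric.tendsto_atTop.mp hT) (ε / (2 * (M + 1)))
      (by positivity)
    refine ⟨max (max N K) 1, fun n hn => ?_⟩
    have hnN : N ≤ n := le_trans (le_trans (le_max_left _ _) (le_max_left _ _)) hn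
    have hnK : K ≤ n := le_trans (le_trans (le_max_right _ _) (le_max_left _ _)) hn
    have hn1 : 1 ≤ n := le_trans (le_max_right _ _) hn
    have e1 : Finset.Icc 1 n = Finset.Ioc 0 n := by ext k; simp; omega
    have e2 : Finset.Icc 1 K = Finset.Ioc 0 K := by ext k; simp; omega
    have hsplit : S n = (∑ k ∈ Finset.Ioc 0 K, p n k * dist (x k) x₀ ^ 2)
        + ∑ k ∈ Finset.Ioc K n, p n k * dist (x k) x₀ ^ 2 := by
      rw [hS_def]
      simp only
      rw [e1, ← Finset.sum_Ioc_consecutive _ (Nat.zero_le K) hnK]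
    have hsub1 : Finset.Ioc 0 K ⊆ Finset.Icc 1 n := by
      intro k hk; simp at hk ⊢; omega
    have hsub2 : Finset.Ioc K n ⊆ Finset.Icc 1 n := by
      intro k hk; simp at hk ⊢; omega
    have part1 : (∑ k ∈ Finset.Ioc 0 K, p n k * dist (x k) x₀ ^ 2)
        ≤ (M + 1) * ∑ k ∈ Finset.Icc 1 K, p n k := by
      rw [e2, Finset.mul_sum]
      refine Finset.sum_le_sum fun k hk => ?_
      have hp := hpos n hn1 k (hsub1 hk)
      calc p n k * dist (x k) x₀ ^ 2 ≤ p n k * (M + 1) :=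
            mul_le_mul_of_nonneg_left (hM' k) hp
        _ = (M + 1) * p n k := by ring
    have hTn : (∑ k ∈ Finset.Icc 1 K, p n k) < ε / (2 * (M + 1)) := by
      have := hN n hnN
      rw [Real.dist_eq] at this
      exact lt_of_le_of_lt (le_abs_self _) (by simpa using this)
    have part1' : (∑ k ∈ Finset.Ioc 0 K, p n k * dist (x k) x₀ ^ 2) < ε / 2 := by
      have h1 : (M + 1) * (∑ k ∈ Finset.Icc 1 K, p n k) < (M + 1) * (ε / (2 * (M + 1))) :=
        mul_lt_mul_of_pos_left hTn hMpos
      have h2 : (M + 1) * (ε / (2 * (M + 1))) = ε / 2 := by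
        field_simp
      linarith
    have part2 : (∑ k ∈ Finset.Ioc K n, p n k * dist (x k) x₀ ^ 2) ≤ ε / 2 := by
      have step1 : (∑ k ∈ Finset.Ioc K n, p n k * dist (x k) x₀ ^ 2)
          ≤ ∑ k ∈ Finset.Ioc K n, p n k * (ε / 2) := by
        refine Finset.sum_le_sum fun k hk => ?_
        have hkK : K ≤ k := by simp at hk; omega
        exact mul_le_mul_of_nonneg_left (le_of_lt (hKsmall k hkK)) (hpos n hn1 k (hsub2 hk))
      have step2 : (∑ k ∈ Finset.Ioc K n, p n k) ≤ 1 := by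
        rw [← hsum n hn1]
        exact Finset.sum_le_sum_of_subset_of_nonneg hsub2
          (fun k hk _ => hpos n hn1 k hk)
      calc (∑ k ∈ Finset.Ioc K n, p n k * dist (x k) x₀ ^ 2)
          ≤ ∑ k ∈ Finset.Ioc K n, p n k * (ε / 2) := step1
        _ = (∑ k ∈ Finset.Ioc K n, p n k) * (ε / 2) := by rw [← Finset.sum_mul]
        _ ≤ 1 * (ε / 2) := by
            apply mul_le_mul_of_nonneg_right step2 (by linarith)
        _ = ε / 2 := by ring
    rw [Real.dist_eq, abs_of_nonneg (by simpa using hS0 n)]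
    simp only [sub_zero]
    rw [hsplit] at *
    linarith
  -- variance inequality: d(m n, x₀)² ≤ 2 S n for n ≥ 1
  have key : ∀ n, 1 ≤ n → dist (m n) x₀ ^ 2 ≤ 2 * S n := by
    intro n hn
    have ht : (1/2 : ℝ) ∈ Set.Icc (0:ℝ) 1 := by constructor <;> norm_num
    have h2 : ∑ k ∈ Finset.Icc 1 n, p n k * dist (x k) (g (m n) x₀ (1/2)) ^ 2
        ≤ ∑ k ∈ Finset.Icc 1 n, p n k * ((1 - 1/2) * dist (x k) (m n) ^ 2
            + (1/2) * dist (x k) x₀ ^ 2 - (1/2) * (1 - 1/2) * dist (m n) x₀ ^ 2) :=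
      Finset.sum_le_sum fun k hk =>
        mul_le_mul_of_nonneg_left (hnpc (m n) x₀ (x k) (1/2) ht) (hpos n hn k hk)
    have hexp : ∑ k ∈ Finset.Icc 1 n, p n k * ((1 - 1/2) * dist (x k) (m n) ^ 2
            + (1/2) * dist (x k) x₀ ^ 2 - (1/2) * (1 - 1/2) * dist (m n) x₀ ^ 2)
        = (1/2) * (∑ k ∈ Finset.Icc 1 n, p n k * dist (x k) (m n) ^ 2)
          + (1/2) * S n - (1/4 * dist (m n) x₀ ^ 2) * ∑ k ∈ Finset.Icc 1 n, p n k := by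
      rw [Finset.sum_congr rfl (fun k _ =>
        show p n k * ((1 - 1/2) * dist (x k) (m n) ^ 2
            + (1/2) * dist (x k) x₀ ^ 2 - (1/2) * (1 - 1/2) * dist (m n) x₀ ^ 2)
          = (1/2) * (p n k * dist (x k) (m n) ^ 2)
            + (1/2) * (p n k * dist (x k) x₀ ^ 2)
            - (1/4 * dist (m n) x₀ ^ 2) * p n k from by ring)]
      rw [Finset.sum_sub_distrib, Finset.sum_add_distrib, ← Finset.mul_sum,
        ← Finset.mul_sum, ← Finset.mul_sum]
    have h3 := hm n hn (g (m n) x₀ (1/2))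
    have hFm0 : 0 ≤ ∑ k ∈ Finset.Icc 1 n, p n k * dist (x k) (m n) ^ 2 :=
      Finset.sum_nonneg fun k hk => mul_nonneg (hpos n hn k hk) (sq_nonneg _)
    rw [hexp, hsum n hn, mul_one] at h2
    linarith
  -- squeeze
  have hsq : Tendsto (fun n => dist (m n) x₀ ^ 2) atTop (nhds 0) := by
    apply squeeze_zero' (Eventually.of_forall fun n => sq_nonneg _)
    · filter_upwards [eventually_ge_atTop 1] with n hn using key n hn
    · simpa using hStend.const_mul 2
  have hd : Tendsto (fun n => dist (m n) x₀) atTop (nhds 0) := by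
    have hc : Tendsto Real.sqrt (nhds 0) (nhds 0) := by
      simpa using (Real.continuous_sqrt.tendsto 0)
    have := hc.comp hsq
    simpa [Function.comp_def, Real.sqrt_sq dist_nonneg] using this
  exact tendsto_iff_dist_tendsto_zero.mpr hd
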